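/- arXiv:1905.00350 — 3 statements merged into one kernel-verified Lean document; each statement's English description precedes it below -/
import Mathlib

section
/- Let q ≥ 1, ζ = exp(2πi/q), and let u, v be unit vectors in ℂⁿ with v not in the complex span of u. Let Pv = v − ⟪u,v⟫u. Then for every unit vector w ∈ ℂⁿ with ⟪u,w⟫ = 0 and every h ∈ ℤ/qℤ, one has Re⟪v, ζʰw⟫ ≤ ‖Pv‖; hence arccos(‖Pv‖) ≤ min over h ∈ ℤ/qℤ of arccos(Re⟪v, ζʰw⟫). In other words, the normalized projection Pv/‖Pv‖ realizes, among all unit vectors in the complex orthogonal complement of u, the minimal orbit distance to v: the projected class 𝒫_u([v]) is the point of L_q^{n−1}(u) closest to [v] with respect to d_L. -/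
/-!
Subtracting the `u`-component of `v` does not change its inner product with a vector `w`
orthogonal to `u`, so `Re⟪v, ζʰ w⟫ = Re⟪Pv, ζʰ w⟫ ≤ ‖Pv‖` by Cauchy–Schwarz, as `ζʰ w` is again a
unit vector orthogonal to `u`. The bound on `arccos` follows because `arccos` is antitone.
-/

open scoped InnerProductSpace

section Projection

variable {𝕜 E : Type*} [RCLike 𝕜] [NormedAddCommGroup E] [InnerProductSpace 𝕜 E]

theorem inner_sub_inner_smul_left_of_inner_eq_zero {u w : E} (huw : ⟪u, w⟫_𝕜 = 0) (v : E) :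
    ⟪v - ⟪u, v⟫_𝕜 • u, w⟫_𝕜 = ⟪v, w⟫_𝕜 := by
  rw [inner_sub_left, inner_smul_left, huw, mul_zero, sub_zero]

theorem re_inner_le_norm_sub_inner_smul_mul_norm {u w : E} (huw : ⟪u, w⟫_𝕜 = 0) (v : E) :
    RCLike.re ⟪v, w⟫_𝕜 ≤ ‖v - ⟪u, v⟫_𝕜 • u‖ * ‖w‖ := by
  rw [← inner_sub_inner_smul_left_of_inner_eq_zero huw v]
  exact re_inner_le_norm _ _

end Projection

theorem Complex.norm_exp_two_pi_I_div (q : ℕ) : ‖Complex.exp (2 * Real.pi * Complex.I / q)‖ = 1 := by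
  have : 2 * Real.pi * Complex.I / q = ((2 * Real.pi / q : ℝ) : ℂ) * Complex.I := by
    push_cast; ring
  rw [this, Complex.norm_exp_ofReal_mul_I]

theorem lens_projection_minimality_general
    (n q : ℕ)
    (ζ : ℂ) (hζ : ζ = Complex.exp (2 * Real.pi * Complex.I / q))
    (u v : EuclideanSpace ℂ (Fin n)) :
    ∀ Pv : EuclideanSpace ℂ (Fin n), Pv = v - (inner ℂ u v : ℂ) • u →
      ∀ w : EuclideanSpace ℂ (Fin n), ‖w‖ = 1 → (inner ℂ u w : ℂ) = 0 →
        (∀ h : ZMod q, (inner ℂ v ((ζ ^ h.val) • w) : ℂ).re ≤ ‖Pv‖)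
        ∧ Real.arccos ‖Pv‖
            ≤ ⨅ h : ZMod q, Real.arccos ((inner ℂ v ((ζ ^ h.val) • w) : ℂ).re) := by
  rintro Pv rfl w hw huw
  have hζ_norm : ‖ζ‖ = 1 := hζ ▸ Complex.norm_exp_two_pi_I_div q
  have key (h : ZMod q) : (inner ℂ v ((ζ ^ h.val) • w) : ℂ).re ≤ ‖v - (inner ℂ u v : ℂ) • u‖ := by
    have huζw : ⟪u, (ζ ^ h.val) • w⟫_ℂ = 0 := by rw [inner_smul_right, huw, mul_zero]
    simpa only [norm_smul, norm_pow, hw, hζ_norm, one_pow, mul_one, RCLike.re_to_complex] using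
      re_inner_le_norm_sub_inner_smul_mul_norm huζw v
  exact ⟨key, le_ciInf fun h => Real.arccos_le_arccos (key h)⟩

/-- Let `q ≥ 1`, `ζ = exp(2πi/q)`, and let `u, v` be unit vectors in
`ℂⁿ` with `v` not in the complex span of `u`. Let `Pv = v − ⟪u,v⟫ • u`. Then for every
unit vector `w` with `⟪u,w⟫ = 0` and every `h ∈ ℤ/qℤ`, `Re⟪v, ζʰ • w⟫ ≤ ‖Pv‖`; hence
`arccos ‖Pv‖ ≤ min_h arccos(Re⟪v, ζʰ • w⟫)`: the projected class is the point of
`L_q^{n−1}(u)` closest to `[v]`. -/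
theorem lens_projection_minimality
    (n q : ℕ) (hq : 1 ≤ q)
    (ζ : ℂ) (hζ : ζ = Complex.exp (2 * Real.pi * Complex.I / q))
    (u v : EuclideanSpace ℂ (Fin n)) (hu : ‖u‖ = 1) (hv : ‖v‖ = 1)
    (hspan : v ∉ Submodule.span ℂ ({u} : Set (EuclideanSpace ℂ (Fin n)))) :
    ∀ Pv : EuclideanSpace ℂ (Fin n), Pv = v - (inner ℂ u v : ℂ) • u →
      ∀ w : EuclideanSpace ℂ (Fin n), ‖w‖ = 1 → (inner ℂ u w : ℂ) = 0 →
        (∀ h : ZMod q, (inner ℂ v ((ζ ^ h.val) • w) : ℂ).re ≤ ‖Pv‖)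
        ∧ Real.arccos ‖Pv‖
            ≤ ⨅ h : ZMod q, Real.arccos ((inner ℂ v ((ζ ^ h.val) • w) : ℂ).re) :=
  lens_projection_minimality_general n q ζ hζ u v
end

section
/- Let q ≥ 1, ζ = exp(2πi/q), let B be a topological space with open cover U₁, …, Uₙ, let φ₁, …, φₙ : B → [0,1] be a partition of unity with Σₗ φₗ = 1 and such that φₗ(b) ≠ 0 implies b ∈ Uₗ, and let η : {1,…,n}² → ℤ/qℤ satisfy the cocycle condition: η(j,k) + η(k,l) = η(j,l) whenever Uⱼ ∩ U_k ∩ Uₗ ≠ ∅. For j ∈ {1,…,n}, g ∈ ℤ/qℤ, and b ∈ B define fⱼ(b,g) = (√φ₁(b)·ζ^{g+η(j,1)}, …, √φₙ(b)·ζ^{g+η(j,n)}) ∈ ℂⁿ. Then: (i) for every b ∈ Uⱼ ∩ U_k and g ∈ ℤ/qℤ, fⱼ(b,g) = f_k(b, g + η(j,k)); and (ii) for every m ∈ ℤ/qℤ, ζᵐ · fⱼ(b,g) = fⱼ(b, g+m). In particular the map [√φ₁(b)ζ^{η(j,1)} : ⋯ : √φₙ(b)ζ^{η(j,n)}], taken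 as a ℤ_q-orbit class in the Lens space, is independent of the index j with b ∈ Uⱼ. -/
theorem pow_zmod_val_add {M : Type*} [Monoid M] {q : ℕ} [NeZero q] {ζ : M} (hζ : ζ ^ q = 1)
    (x y : ZMod q) : ζ ^ (x + y).val = ζ ^ x.val * ζ ^ y.val := by
  rw [ZMod.val_add, ← pow_eq_pow_mod _ hζ, pow_add]

section LensLift

variable {ι B : Type*} {q : ℕ} (ζ : ℂ) (φ : ι → B → ℝ) (η : ι → ι → ZMod q)

/-- The paper's `fⱼ(b, g)`. -/
noncomputable def lensLift (j : ι) (b : B) (g : ZMod q) : ι → ℂ :=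
  fun l => (√(φ l b) : ℂ) * ζ ^ (g + η j l).val

/-- Where `φₗ(b) = 0` both `l`-th coordinates vanish; elsewhere `b ∈ Uⱼ ∩ U_k ∩ Uₗ`, so the
cocycle condition applies. -/
theorem lensLift_eq_of_mem_inter {U : ι → Set B} (hφsupp : ∀ l b, φ l b ≠ 0 → b ∈ U l)
    (hcocycle : ∀ j k l, (U j ∩ U k ∩ U l).Nonempty → η j k + η k l = η j l)
    {j k : ι} {b : B} (hb : b ∈ U j ∩ U k) (g : ZMod q) :
    lensLift ζ φ η j b g = lensLift ζ φ η k b (g + η j k) := by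
  funext l
  by_cases hl : φ l b = 0
  · simp [lensLift, hl]
  · have hco := hcocycle j k l ⟨b, hb, hφsupp l b hl⟩
    simp only [lensLift, add_assoc, hco]

theorem smul_lensLift [NeZero q] (hζ : ζ ^ q = 1) (j : ι) (b : B) (g m : ZMod q) :
    ζ ^ m.val • lensLift ζ φ η j b g = lensLift ζ φ η j b (g + m) := by
  funext l
  simp only [lensLift, Pi.smul_apply, smul_eq_mul, add_right_comm g m,
    pow_zmod_val_add hζ (g + η j l) m]
  ring

end LensLift

theorem lens_classifying_map_wellDefined_equivariant_general
    (n q : ℕ) (hq : 1 ≤ q)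
    (ζ : ℂ) (hζ : ζ = Complex.exp (2 * Real.pi * Complex.I / q))
    {B : Type*}
    (U : Fin n → Set B)
    (φ : Fin n → B → ℝ)
    (hφsupp : ∀ l b, φ l b ≠ 0 → b ∈ U l)
    (η : Fin n → Fin n → ZMod q)
    (hcocycle : ∀ j k l, (U j ∩ U k ∩ U l).Nonempty → η j k + η k l = η j l)
    (f : Fin n → B → ZMod q → EuclideanSpace ℂ (Fin n))
    (hf : ∀ j b g, f j b g
        = fun l => (Real.sqrt (φ l b) : ℂ) * ζ ^ (g + η j l).val) :
    (∀ j k : Fin n, ∀ b ∈ U j ∩ U k, ∀ g : ZMod q,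
        f j b g = f k b (g + η j k))
    ∧ (∀ j : Fin n, ∀ b : B, ∀ g m : ZMod q,
        (ζ ^ m.val) • f j b g = f j b (g + m))
    ∧ (∀ j k : Fin n, ∀ b ∈ U j ∩ U k,
        ∃ m : ZMod q, f j b 0 = (ζ ^ m.val) • f k b 0) := by
  have : NeZero q := ⟨by omega⟩
  have hroot : ζ ^ q = 1 := hζ ▸ (Complex.isPrimitiveRoot_exp q (NeZero.ne q)).pow_eq_one
  have hf' : ∀ j b g, f j b g = WithLp.toLp 2 (lensLift ζ φ η j b g) :=
    fun j b g => WithLp.ofLp_injective (p := 2) (hf j b g)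
  have change_chart : ∀ j k : Fin n, ∀ b ∈ U j ∩ U k, ∀ g : ZMod q,
      f j b g = f k b (g + η j k) := by
    intro j k b hb g
    rw [hf', hf', lensLift_eq_of_mem_inter ζ φ η hφsupp hcocycle hb]
  have equivariant : ∀ j : Fin n, ∀ b : B, ∀ g m : ZMod q,
      ζ ^ m.val • f j b g = f j b (g + m) := by
    intro j b g m
    rw [hf', hf', ← WithLp.toLp_smul, smul_lensLift ζ φ η hroot]
  refine ⟨change_chart, equivariant, fun j k b hb => ⟨η j k, ?_⟩⟩
  rw [change_chart j k b hb 0, ← equivariant k b 0 (η j k)]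

/-- Let `q ≥ 1`, `ζ = exp(2πi/q)`, let `B` be a topological space
with open cover `U₁, …, Uₙ`, let `φ₁, …, φₙ : B → [0,1]` be a partition of unity
subordinate to the cover, and let `η : Fin n × Fin n → ℤ/qℤ` satisfy the cocycle
condition on triply-intersecting sets. Define
`fⱼ(b,g) = (√φ₁(b)·ζ^{g+η(j,1)}, …, √φₙ(b)·ζ^{g+η(j,n)}) ∈ ℂⁿ`. Then:
(i) for `b ∈ Uⱼ ∩ U_k` and any `g`, `fⱼ(b,g) = f_k(b, g + η(j,k))`;
(ii) `ζᵐ • fⱼ(b,g) = fⱼ(b, g + m)`; and in particular the `ℤ/qℤ`-orbit class of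
`fⱼ(b,0)` is independent of the index `j` with `b ∈ Uⱼ`. -/
theorem lens_classifying_map_wellDefined_equivariant
    (n q : ℕ) (hq : 1 ≤ q)
    (ζ : ℂ) (hζ : ζ = Complex.exp (2 * Real.pi * Complex.I / q))
    {B : Type*} [TopologicalSpace B]
    (U : Fin n → Set B) (hUopen : ∀ j, IsOpen (U j)) (hUcover : ⋃ j, U j = Set.univ)
    (φ : Fin n → B → ℝ)
    (hφ0 : ∀ l b, 0 ≤ φ l b) (hφ1 : ∀ l b, φ l b ≤ 1)
    (hφcont : ∀ l, Continuous (φ l))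
    (hφsum : ∀ b, ∑ l, φ l b = 1)
    (hφsupp : ∀ l b, φ l b ≠ 0 → b ∈ U l)
    (η : Fin n → Fin n → ZMod q)
    (hcocycle : ∀ j k l, (U j ∩ U k ∩ U l).Nonempty → η j k + η k l = η j l)
    (f : Fin n → B → ZMod q → EuclideanSpace ℂ (Fin n))
    (hf : ∀ j b g, f j b g
        = fun l => (Real.sqrt (φ l b) : ℂ) * ζ ^ (g + η j l).val) :
    (∀ j k : Fin n, ∀ b ∈ U j ∩ U k, ∀ g : ZMod q,
        f j b g = f k b (g + η j k))
    ∧ (∀ j : Fin n, ∀ b : B, ∀ g m : ZMod q,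
        (ζ ^ m.val) • f j b g = f j b (g + m))
    ∧ (∀ j k : Fin n, ∀ b ∈ U j ∩ U k,
        ∃ m : ZMod q, f j b 0 = (ζ ^ m.val) • f k b 0) :=
  lens_classifying_map_wellDefined_equivariant_general n q hq ζ hζ U φ hφsupp η hcocycle f hf
end

section
/- Let q ≥ 1, ζ = exp(2πi/q), let φ₁, …, φₙ : B → [0,1] be a partition of unity on a space B, let η : {1,…,n}² → ℤ/qℤ, let α : {1,…,n} → ℤ/qℤ, and set η'(j,k) = η(j,k) + α(k) − α(j) (i.e. η' = η + δ⁰α is cohomologous to η). Then for every j and every b ∈ B, the vector (√φ₁(b)·ζ^{η'(j,1)}, …, √φₙ(b)·ζ^{η'(j,n)}) equals ζ^{−α(j)} · Z_α · (√φ₁(b)·ζ^{η(j,1)}, …, √φₙ(b)·ζ^{η(j,n)}), where Z_α is the diagonal matrix with diagonal entries ζ^{α(1)}, …, ζ^{α(n)}. In particular, passing to ℤ_q-orbit classes, f_{η'}(b) = Z_α · f_η(b) in the Lens space L_q^n: the Lens coordinates of cohomologous cocycles differ by the isometry of L_q^n induced by the unitary map Z_α. -/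
open Complex

theorem exp_two_pi_I_div_pow_val_add (q : ℕ) (x y : ZMod q) :
    exp (2 * Real.pi * I / q) ^ (x + y).val
      = exp (2 * Real.pi * I / q) ^ x.val * exp (2 * Real.pi * I / q) ^ y.val := by
  rcases eq_or_ne q 0 with rfl | hq
  · simp -- `2πi / 0 = 0`, so the root is `1`
  · have : NeZero q := ⟨hq⟩
    exact (AddChar.zmodChar q (isPrimitiveRoot_exp q hq).pow_eq_one).map_add_eq_mul x y

theorem lens_coordinates_cohomologous_cocycles_general
    (n q : ℕ)
    (ζ : ℂ) (hζ : ζ = Complex.exp (2 * Real.pi * Complex.I / q))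
    {B : Type*} (φ : Fin n → B → ℝ)
    (η η' : Fin n → Fin n → ZMod q) (α : Fin n → ZMod q)
    (hη' : ∀ j k, η' j k = η j k + α k - α j) :
    ∀ (j : Fin n) (b : B),
      (WithLp.toLp 2 (fun l => (Real.sqrt (φ l b) : ℂ) * ζ ^ (η' j l).val)
          : EuclideanSpace ℂ (Fin n))
        = (ζ ^ (-α j).val) •
          (WithLp.toLp 2 (fun l => (ζ ^ (α l).val) * ((Real.sqrt (φ l b) : ℂ) * ζ ^ (η j l).val))
            : EuclideanSpace ℂ (Fin n)) := by
  intro j b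
  subst hζ
  ext l
  have hshift : η' j l = -α j + (α l + η j l) := by rw [hη']; ring
  simp only [PiLp.smul_apply, smul_eq_mul, hshift, exp_two_pi_I_div_pow_val_add]
  ring

/-- Let `q ≥ 1`, `ζ = exp(2πi/q)`, let `φ₁, …, φₙ : B → [0,1]` be a
partition of unity on a space `B`, let `η : Fin n × Fin n → ℤ/qℤ`,
`α : Fin n → ℤ/qℤ`, and set `η'(j,k) = η(j,k) + α(k) − α(j)`. Then for every `j` and
`b ∈ B`, the vector `(√φₗ(b)·ζ^{η'(j,l)})ₗ` equals
`ζ^{−α(j)} • Z_α (√φₗ(b)·ζ^{η(j,l)})ₗ`, where `Z_α` is the diagonal matrix with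
entries `ζ^{α(l)}`. In particular the Lens coordinates of cohomologous cocycles
differ by the isometry induced by `Z_α`. -/
theorem lens_coordinates_cohomologous_cocycles
    (n q : ℕ) (hq : 1 ≤ q)
    (ζ : ℂ) (hζ : ζ = Complex.exp (2 * Real.pi * Complex.I / q))
    {B : Type*} (φ : Fin n → B → ℝ)
    (hφ0 : ∀ l b, 0 ≤ φ l b) (hφ1 : ∀ l b, φ l b ≤ 1)
    (hφsum : ∀ b, ∑ l, φ l b = 1)
    (η η' : Fin n → Fin n → ZMod q) (α : Fin n → ZMod q)
    (hη' : ∀ j k, η' j k = η j k + α k - α j) :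
    ∀ (j : Fin n) (b : B),
      (WithLp.toLp 2 (fun l => (Real.sqrt (φ l b) : ℂ) * ζ ^ (η' j l).val)
          : EuclideanSpace ℂ (Fin n))
        = (ζ ^ (-α j).val) •
          (WithLp.toLp 2 (fun l => (ζ ^ (α l).val) * ((Real.sqrt (φ l b) : ℂ) * ζ ^ (η j l).val))
            : EuclideanSpace ℂ (Fin n)) :=
  lens_coordinates_cohomologous_cocycles_general n q ζ hζ φ η η' α hη'
end
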